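/- arXiv:1602.07107 — 4 statements merged into one kernel-verified Lean document; each statement's English description precedes it below -/
import Mathlib

section
/- Let n > 2 be an integer, α ∈ (0,1] and p ∈ (0,1)^n. Let G be uniform on {+1,−1}, and conditionally on G let X_1,…,X_n ∈ {−1,0,+1} be independent with X_i = G with probability α(1−p_i), X_i = −G with probability α p_i, and X_i = 0 with probability 1−α. Set w_i = log(1/p_i − 1) and W = (1/n) Σ_{i=1}^n w_i X_i, and let G* = 1{W > 0} − 1{W < 0} + Z·1{W = 0}, where Z is uniform on {+1,−1} and independent of (G, X). Then for every estimator of the form Ĝ = ψ(X, U), where ψ is any function into {+1,−1} and U is a random variable independent of (G, X), one has P(Ĝ ≠ G) ≥ P(G* ≠ G). -/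
open MeasureTheory Finset
open scoped Classical

/-- Joint probability of `(G, X) = (g, x)` for one task in the crowdsourcing model:
`G` is uniform on `{+1,−1}` and, given `G = g`, the labels are independent with
`X_i = g` w.p. `α(1−p_i)`, `X_i = −g` w.p. `α p_i`, `X_i = 0` w.p. `1−α`. -/
noncomputable def taskScore (n : ℕ) (α : ℝ) (p : Fin n → ℝ) (g : ℤ) (x : Fin n → ℤ) : ℝ :=
  (1 / 2 : ℝ) * ∏ i, (if x i = g then α * (1 - p i) else if x i = -g then α * p i else 1 - α)

/-! The error probability splits over the atoms `{X = x}`. On such an atom an estimator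
`ψ(x, U)` errs with probability `a · P(G = 1, X = x) + b · P(G = -1, X = x)`, where
`a = P(ψ(x, U) ≠ 1)` and `b = P(ψ(x, U) ≠ -1)` satisfy `a + b ≥ 1`; hence it errs with probability
at least the smaller of the two atom probabilities. Their ratio is the likelihood ratio
`exp (∑ i, w i * x i)`, so the weighted vote always picks the likelier value of `G` and attains
this minimum; on a tie the two atoms are equally likely and the fair coin `Z` attains it too. -/

theorem MeasureTheory.measure_eq_sum_measure_inter_of_subset_biUnion {Ω ι : Type*}
    [MeasurableSpace Ω] (μ : Measure Ω) {s : Finset ι} {E : ι → Set Ω}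
    (hE : ∀ i, MeasurableSet (E i)) (hd : (s : Set ι).PairwiseDisjoint E) {A : Set Ω}
    (hA : A ⊆ ⋃ i ∈ s, E i) : μ A = ∑ i ∈ s, μ (A ∩ E i) := by
  calc μ A = μ.restrict (⋃ i ∈ s, E i) A := (Measure.restrict_eq_self μ hA).symm
    _ = ∑ i ∈ s, μ.restrict (E i) A := by
      rw [Measure.restrict_biUnion_finset hd hE, Measure.sum_apply_of_countable,
        Finset.tsum_subtype s fun i => μ.restrict (E i) A]
    _ = ∑ i ∈ s, μ (A ∩ E i) := by simp only [Measure.restrict_apply' (hE _)]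

theorem MeasureTheory.one_le_measure_ne_add_measure_ne {Ω α : Type*} [MeasurableSpace Ω]
    (μ : Measure Ω) [IsProbabilityMeasure μ] (f : Ω → α) {a b : α} (hab : a ≠ b) :
    1 ≤ μ {ω | f ω ≠ a} + μ {ω | f ω ≠ b} := by
  have hcover : {ω | f ω ≠ a} ∪ {ω | f ω ≠ b} = Set.univ := by
    ext ω
    simpa only [Set.mem_union, Set.mem_ofPred_eq, Set.mem_univ, iff_true, ← not_and_or]
      using fun h => hab (h.1.symm.trans h.2)
  calc 1 = μ ({ω | f ω ≠ a} ∪ {ω | f ω ≠ b}) := by rw [hcover, measure_univ]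
    _ ≤ _ := measure_union_le _ _

theorem ENNReal.min_le_mul_add_mul {a b s t : ENNReal} (h : 1 ≤ a + b) :
    min s t ≤ a * s + b * t :=
  calc min s t ≤ (a + b) * min s t := le_mul_of_one_le_left' h
    _ = a * min s t + b * min s t := add_mul _ _ _
    _ ≤ a * s + b * t := by gcongr; exacts [min_le_left s t, min_le_right s t]

theorem ENNReal.ofReal_le_ofReal_exp_mul {s t : ℝ} (hs : 0 ≤ s) :
    ENNReal.ofReal t ≤ ENNReal.ofReal (Real.exp s * t) := by
  refine ENNReal.ofReal_le_ofReal_iff'.mpr ?_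
  rcases le_or_gt t 0 with ht | ht
  · exact .inr ht
  · exact .inl (le_mul_of_one_le_left ht.le (Real.one_le_exp hs))

theorem ENNReal.ofReal_exp_mul_le_ofReal {s t : ℝ} (hs : s ≤ 0) :
    ENNReal.ofReal (Real.exp s * t) ≤ ENNReal.ofReal t := by
  refine ENNReal.ofReal_le_ofReal_iff'.mpr ?_
  rcases le_or_gt t 0 with ht | ht
  · exact .inr (mul_nonpos_of_nonneg_of_nonpos (Real.exp_pos s).le ht)
  · exact .inl (mul_le_of_le_one_left ht.le (Real.exp_le_one_iff.mpr hs))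

theorem taskScore_one_eq_exp_mul {n : ℕ} (α : ℝ) {p : Fin n → ℝ}
    (hp : ∀ i, p i ∈ Set.Ioo (0 : ℝ) 1) {x : Fin n → ℤ} (hx : ∀ i, x i = -1 ∨ x i = 0 ∨ x i = 1) :
    taskScore n α p 1 x
      = Real.exp (∑ i, Real.log (1 / p i - 1) * x i) * taskScore n α p (-1) x := by
  unfold taskScore
  rw [Real.exp_sum, mul_left_comm, ← prod_mul_distrib]
  congr 1
  refine prod_congr rfl fun i _ => ?_
  obtain ⟨hp0, hp1⟩ := hp i
  have hodds : Real.exp (Real.log (1 / p i - 1)) = (1 - p i) / p i := by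
    rw [Real.exp_log (by rw [lt_sub_iff_add_lt, lt_div_iff₀ hp0]; linarith)]
    field_simp
  generalize Real.log (1 / p i - 1) = w at hodds ⊢
  rcases hx i with h | h | h <;> simp only [h] <;> norm_num
  · rw [Real.exp_neg, hodds]
    field_simp
  · rw [hodds]
    field_simp

section LabelAtoms

variable {Ω : Type*} {n : ℕ} {G : Ω → ℤ} {X : Fin n → Ω → ℤ}

def labelAtom (G : Ω → ℤ) (X : Fin n → Ω → ℤ) (g : ℤ) (x : Fin n → ℤ) : Set Ω :=
  {ω | G ω = g ∧ ∀ i, X i ω = x i}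

theorem labelAtom_eq_preimage (g : ℤ) (x : Fin n → ℤ) :
    labelAtom G X g x = (fun ω => (G ω, fun i => X i ω)) ⁻¹' {(g, x)} := by
  ext ω
  simp [labelAtom, funext_iff]

theorem weightedVote_eq_of_mem_labelAtom {Z : Ω → ℤ} {w : Fin n → ℝ} {W : Ω → ℝ}
    (hW : ∀ ω, W ω = (1 / (n : ℝ)) * ∑ i, w i * (X i ω : ℝ)) {Gstar : Ω → ℤ}
    (hGstar : ∀ ω, Gstar ω = if 0 < W ω then 1 else if W ω < 0 then -1 else Z ω)
    {g : ℤ} {x : Fin n → ℤ} {ω : Ω} (hω : ω ∈ labelAtom G X g x) :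
    Gstar ω = if 0 < ∑ i, w i * (x i : ℝ) then 1
      else if ∑ i, w i * (x i : ℝ) < 0 then -1 else Z ω := by
  rw [hGstar, hW]
  simp only [hω.2]
  obtain rfl | hn := n.eq_zero_or_pos
  · simp
  · have hc : (0 : ℝ) < 1 / n := by positivity
    have hneg (s : ℝ) : 1 / (n : ℝ) * s < 0 ↔ s < 0 := smul_neg_iff_of_pos_left hc
    simp only [mul_pos_iff_of_pos_left hc, hneg]

variable [MeasurableSpace Ω] {μ : Measure Ω}

theorem measurableSet_labelAtom (hG : Measurable G) (hX : ∀ i, Measurable (X i)) (g : ℤ)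
    (x : Fin n → ℤ) : MeasurableSet (labelAtom G X g x) := by
  rw [labelAtom_eq_preimage]
  exact (hG.prodMk (measurable_pi_lambda _ hX)) (measurableSet_singleton _)

theorem measure_eq_sum_labelAtoms (hG : Measurable G) (hX : ∀ i, Measurable (X i))
    (hGval : ∀ ω, G ω = 1 ∨ G ω = -1) (hXval : ∀ i ω, X i ω = -1 ∨ X i ω = 0 ∨ X i ω = 1)
    (A : Set Ω) :
    μ A = ∑ x ∈ Fintype.piFinset fun _ => ({-1, 0, 1} : Finset ℤ),
      (μ (A ∩ labelAtom G X 1 x) + μ (A ∩ labelAtom G X (-1) x)) := by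
  rw [measure_eq_sum_measure_inter_of_subset_biUnion μ (s := {1, -1} ×ˢ _)
    (E := fun gx => labelAtom G X gx.1 gx.2) (fun _ => measurableSet_labelAtom hG hX _ _),
    sum_product_right]
  · exact sum_congr rfl fun x _ => sum_pair (by decide)
  · simpa only [labelAtom_eq_preimage] using Set.pairwiseDisjoint_fiber _ _
  · intro ω _
    simp only [Set.mem_iUnion]
    refine ⟨(G ω, fun i => X i ω), ?_, rfl, fun i => rfl⟩
    simpa [mem_product, Fintype.mem_piFinset] using ⟨hGval ω, fun i => hXval i ω⟩

theorem measure_estimator_ne_inter_labelAtom {β : Type*} [MeasurableSpace β] {U : Ω → β}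
    (hUind : ∀ (A : Set β), MeasurableSet A → ∀ (g : ℤ) (x : Fin n → ℤ),
      μ ({ω | U ω ∈ A} ∩ labelAtom G X g x) = μ {ω | U ω ∈ A} * μ (labelAtom G X g x))
    {ψ : (Fin n → ℤ) → β → ℤ} {x : Fin n → ℤ} (hψ : Measurable (ψ x)) (g : ℤ) :
    μ ({ω | ψ (fun i => X i ω) (U ω) ≠ G ω} ∩ labelAtom G X g x)
      = μ {ω | ψ x (U ω) ≠ g} * μ (labelAtom G X g x) := by
  calc _ = μ ({ω | U ω ∈ {u | ψ x u ≠ g}} ∩ labelAtom G X g x) := by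
        congr 1
        ext ω
        refine and_congr_left fun ⟨hg, hx⟩ => ?_
        simp only [Set.mem_ofPred_eq, ← hg, show (fun i => X i ω) = x from funext hx]
    _ = _ := hUind _ (hψ (measurableSet_singleton g).compl) g x

theorem measure_ne_inter_labelAtom_of_eqOn_const {D : Ω → ℤ} {c g : ℤ} {x : Fin n → ℤ}
    (hD : ∀ ω ∈ labelAtom G X g x, D ω = c) :
    μ ({ω | D ω ≠ G ω} ∩ labelAtom G X g x) = if c = g then 0 else μ (labelAtom G X g x) := by
  split_ifs with hc
  · convert measure_empty (μ := μ)
    refine Set.eq_empty_of_forall_notMem fun ω ⟨hne, hω⟩ => hne ?_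
    rw [hD ω hω, hc, hω.1]
  · rw [Set.inter_eq_right.mpr fun ω hω => ?_]
    show D ω ≠ G ω
    rwa [hD ω hω, hω.1]

theorem measure_ne_inter_labelAtom_of_eqOn_tieBreak {Z : Ω → ℤ}
    (hZval : ∀ ω, Z ω = 1 ∨ Z ω = -1)
    (hZind : ∀ (z g : ℤ) (x : Fin n → ℤ), (z = 1 ∨ z = -1) →
      μ ({ω | Z ω = z} ∩ labelAtom G X g x) = 1 / 2 * μ (labelAtom G X g x))
    {D : Ω → ℤ} {g : ℤ} {x : Fin n → ℤ} (hg : g = 1 ∨ g = -1)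
    (hD : ∀ ω ∈ labelAtom G X g x, D ω = Z ω) :
    μ ({ω | D ω ≠ G ω} ∩ labelAtom G X g x) = 1 / 2 * μ (labelAtom G X g x) := by
  rw [← hZind (-g) g x (by omega)]
  congr 1
  ext ω
  refine and_congr_left fun hω => ?_
  simp only [Set.mem_ofPred_eq, hD ω hω, hω.1]
  have := hZval ω
  omega

theorem measure_ne_inter_labelAtoms_le_min {Z : Ω → ℤ} (hZval : ∀ ω, Z ω = 1 ∨ Z ω = -1)
    (hZind : ∀ (z g : ℤ) (x : Fin n → ℤ), (z = 1 ∨ z = -1) →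
      μ ({ω | Z ω = z} ∩ labelAtom G X g x) = 1 / 2 * μ (labelAtom G X g x))
    {D : Ω → ℤ} {s t : ℝ} {x : Fin n → ℤ}
    (hD : ∀ g, ∀ ω ∈ labelAtom G X g x, D ω = if 0 < s then 1 else if s < 0 then -1 else Z ω)
    (h1 : μ (labelAtom G X 1 x) = ENNReal.ofReal (Real.exp s * t))
    (h2 : μ (labelAtom G X (-1) x) = ENNReal.ofReal t) :
    μ ({ω | D ω ≠ G ω} ∩ labelAtom G X 1 x) + μ ({ω | D ω ≠ G ω} ∩ labelAtom G X (-1) x)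
      ≤ min (μ (labelAtom G X 1 x)) (μ (labelAtom G X (-1) x)) := by
  rcases lt_trichotomy 0 s with hs | rfl | hs
  · have hD1 : ∀ g, ∀ ω ∈ labelAtom G X g x, D ω = 1 := fun g ω hω => by simp [hD g ω hω, hs]
    rw [measure_ne_inter_labelAtom_of_eqOn_const (hD1 1),
      measure_ne_inter_labelAtom_of_eqOn_const (hD1 (-1))]
    simp only [if_true, zero_add, le_min_iff, h1, h2]
    exact ⟨ENNReal.ofReal_le_ofReal_exp_mul hs.le, le_rfl⟩
  · have hDZ : ∀ g, ∀ ω ∈ labelAtom G X g x, D ω = Z ω := fun g ω hω => by simp [hD g ω hω]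
    rw [measure_ne_inter_labelAtom_of_eqOn_tieBreak hZval hZind (.inl rfl) (hDZ 1),
      measure_ne_inter_labelAtom_of_eqOn_tieBreak hZval hZind (.inr rfl) (hDZ (-1)), h1, h2,
      Real.exp_zero, one_mul, min_self, ← add_mul, one_div, ENNReal.inv_two_add_inv_two, one_mul]
  · have hD1 : ∀ g, ∀ ω ∈ labelAtom G X g x, D ω = -1 := fun g ω hω => by
      simp [hD g ω hω, hs, hs.not_gt]
    rw [measure_ne_inter_labelAtom_of_eqOn_const (hD1 1),
      measure_ne_inter_labelAtom_of_eqOn_const (hD1 (-1))]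
    simp only [if_true, add_zero, le_min_iff, h1, h2]
    exact ⟨le_rfl, ENNReal.ofReal_exp_mul_le_ofReal hs.le⟩

end LabelAtoms

theorem weighted_majority_vote_optimal_general
    {Ω : Type*} [MeasurableSpace Ω] (μ : Measure Ω) [IsProbabilityMeasure μ]
    {β : Type*} [MeasurableSpace β]
    (n : ℕ) (α : ℝ)
    (p : Fin n → ℝ) (hp : ∀ i, p i ∈ Set.Ioo (0 : ℝ) 1)
    (G : Ω → ℤ) (X : Fin n → Ω → ℤ) (Z : Ω → ℤ) (U : Ω → β)
    (hGmeas : Measurable G) (hXmeas : ∀ i, Measurable (X i))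
    (hGval : ∀ ω, G ω = 1 ∨ G ω = -1)
    (hXval : ∀ i ω, X i ω = -1 ∨ X i ω = 0 ∨ X i ω = 1)
    (hZval : ∀ ω, Z ω = 1 ∨ Z ω = -1)
    -- joint law of (G, X):
    (hlaw : ∀ (g : ℤ) (x : Fin n → ℤ), (g = 1 ∨ g = -1) →
      (∀ i, x i = -1 ∨ x i = 0 ∨ x i = 1) →
      μ {ω | G ω = g ∧ ∀ i, X i ω = x i} = ENNReal.ofReal (taskScore n α p g x))
    -- Z is uniform on {+1,−1} and independent of (G, X):
    (hZind : ∀ (z g : ℤ) (x : Fin n → ℤ), (z = 1 ∨ z = -1) →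
      μ {ω | Z ω = z ∧ G ω = g ∧ ∀ i, X i ω = x i}
        = (1 / 2 : ENNReal) * μ {ω | G ω = g ∧ ∀ i, X i ω = x i})
    -- U is independent of (G, X):
    (hUind : ∀ (A : Set β), MeasurableSet A → ∀ (g : ℤ) (x : Fin n → ℤ),
      μ {ω | U ω ∈ A ∧ G ω = g ∧ ∀ i, X i ω = x i}
        = μ {ω | U ω ∈ A} * μ {ω | G ω = g ∧ ∀ i, X i ω = x i})
    -- the weighted majority vote G* with weights w_i = log(1/p_i − 1):
    (w : Fin n → ℝ) (hw : ∀ i, w i = Real.log (1 / p i - 1))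
    (W : Ω → ℝ) (hW : ∀ ω, W ω = (1 / (n : ℝ)) * ∑ i, w i * (X i ω : ℝ))
    (Gstar : Ω → ℤ)
    (hGstar : ∀ ω, Gstar ω = if 0 < W ω then 1 else if W ω < 0 then -1 else Z ω)
    -- an arbitrary randomized estimator Ĝ = ψ(X, U):
    (ψ : (Fin n → ℤ) → β → ℤ)
    (hψmeas : Measurable (Function.uncurry ψ)) :
    μ {ω | Gstar ω ≠ G ω} ≤ μ {ω | ψ (fun i => X i ω) (U ω) ≠ G ω} := by
  rw [measure_eq_sum_labelAtoms hGmeas hXmeas hGval hXval,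
    measure_eq_sum_labelAtoms hGmeas hXmeas hGval hXval]
  refine sum_le_sum fun x hx => ?_
  have hxval : ∀ i, x i = -1 ∨ x i = 0 ∨ x i = 1 := by simpa [Fintype.mem_piFinset] using hx
  have hlik : μ (labelAtom G X 1 x)
      = ENNReal.ofReal (Real.exp (∑ i, w i * x i) * taskScore n α p (-1) x) := by
    rw [funext hw, ← taskScore_one_eq_exp_mul α hp hxval]
    exact hlaw 1 x (.inl rfl) hxval
  rw [measure_estimator_ne_inter_labelAtom hUind hψmeas.of_uncurry_left,
    measure_estimator_ne_inter_labelAtom hUind hψmeas.of_uncurry_left]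
  calc _ ≤ min (μ (labelAtom G X 1 x)) (μ (labelAtom G X (-1) x)) :=
        measure_ne_inter_labelAtoms_le_min hZval hZind
          (fun _ _ hω => weightedVote_eq_of_mem_labelAtom hW hGstar hω) hlik
          (hlaw (-1) x (.inr rfl) hxval)
    _ ≤ _ := ENNReal.min_le_mul_add_mul (one_le_measure_ne_add_measure_ne μ _ (by decide))

/-- the weighted majority vote `G*` with weights `w_i = log(1/p_i − 1)` and fair
random tie-breaking minimizes the error probability among all randomized estimators
`Ĝ = ψ(X, U)` with `U` independent of `(G, X)`. -/
theorem weighted_majority_vote_optimal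
    {Ω : Type*} [MeasurableSpace Ω] (μ : Measure Ω) [IsProbabilityMeasure μ]
    {β : Type*} [MeasurableSpace β]
    (n : ℕ) (hn : 2 < n) (α : ℝ) (hα : α ∈ Set.Ioc (0 : ℝ) 1)
    (p : Fin n → ℝ) (hp : ∀ i, p i ∈ Set.Ioo (0 : ℝ) 1)
    (G : Ω → ℤ) (X : Fin n → Ω → ℤ) (Z : Ω → ℤ) (U : Ω → β)
    (hGmeas : Measurable G) (hXmeas : ∀ i, Measurable (X i))
    (hZmeas : Measurable Z) (hUmeas : Measurable U)
    (hGval : ∀ ω, G ω = 1 ∨ G ω = -1)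
    (hXval : ∀ i ω, X i ω = -1 ∨ X i ω = 0 ∨ X i ω = 1)
    (hZval : ∀ ω, Z ω = 1 ∨ Z ω = -1)
    -- joint law of (G, X):
    (hlaw : ∀ (g : ℤ) (x : Fin n → ℤ), (g = 1 ∨ g = -1) →
      (∀ i, x i = -1 ∨ x i = 0 ∨ x i = 1) →
      μ {ω | G ω = g ∧ ∀ i, X i ω = x i} = ENNReal.ofReal (taskScore n α p g x))
    -- Z is uniform on {+1,−1} and independent of (G, X):
    (hZind : ∀ (z g : ℤ) (x : Fin n → ℤ), (z = 1 ∨ z = -1) →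
      μ {ω | Z ω = z ∧ G ω = g ∧ ∀ i, X i ω = x i}
        = (1 / 2 : ENNReal) * μ {ω | G ω = g ∧ ∀ i, X i ω = x i})
    -- U is independent of (G, X):
    (hUind : ∀ (A : Set β), MeasurableSet A → ∀ (g : ℤ) (x : Fin n → ℤ),
      μ {ω | U ω ∈ A ∧ G ω = g ∧ ∀ i, X i ω = x i}
        = μ {ω | U ω ∈ A} * μ {ω | G ω = g ∧ ∀ i, X i ω = x i})
    -- the weighted majority vote G* with weights w_i = log(1/p_i − 1):
    (w : Fin n → ℝ) (hw : ∀ i, w i = Real.log (1 / p i - 1))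
    (W : Ω → ℝ) (hW : ∀ ω, W ω = (1 / (n : ℝ)) * ∑ i, w i * (X i ω : ℝ))
    (Gstar : Ω → ℤ)
    (hGstar : ∀ ω, Gstar ω = if 0 < W ω then 1 else if W ω < 0 then -1 else Z ω)
    -- an arbitrary randomized estimator Ĝ = ψ(X, U):
    (ψ : (Fin n → ℤ) → β → ℤ)
    (hψmeas : Measurable (Function.uncurry ψ))
    (hψval : ∀ x u, ψ x u = 1 ∨ ψ x u = -1) :
    μ {ω | Gstar ω ≠ G ω} ≤ μ {ω | ψ (fun i => X i ω) (U ω) ≠ G ω} :=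
  weighted_majority_vote_optimal_general μ n α p hp G X Z U hGmeas hXmeas hGval hXval hZval hlaw
    hZind hUind w hw W hW Gstar hGstar ψ hψmeas
end

section
/- Let n > 2 be an integer, α ∈ (0,1] and p ∈ [0,1]^n with q = (1/n) Σ_{i=1}^n p_i < 1/2. Let G be uniform on {+1,−1} and, conditionally on G, let X_1,…,X_n be independent with X_i = G with probability α(1−p_i), X_i = −G with probability α p_i, and X_i = 0 with probability 1−α. Let Ĝ = 1{S > 0} − 1{S < 0} + Z·1{S = 0} where S = Σ_{i=1}^n X_i and Z is uniform on {+1,−1} independent of (G, X). Then P(Ĝ ≠ G) ≤ exp(−(n/2)(α(1−2q))²). -/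
open MeasureTheory Finset
open scoped Classical

/-! Chernoff bound. Given `G = g` and `X = x`, with `S = Σ xᵢ`, the vote errs with probability
`1` if `g S < 0`, `1/2` if `S = 0` and `0` otherwise, which is at most `exp (-t g S)` for every
`t ≥ 0`. Averaging over the law of `(G, X)`, the labels are conditionally independent, so the
expectation factorises into the moment generating functions of the `{-1, 0, 1}`-valued variables
`g Xᵢ` of mean `α (1 - 2 pᵢ)`; Hoeffding's lemma bounds each by `exp (-t α (1 - 2 pᵢ) + t² / 2)`.
The product is `exp (-n t α (1 - 2 q) + n t² / 2)`, and `t = α (1 - 2 q)` gives the claim. -/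

open Real ProbabilityTheory

/-- Hoeffding's lemma for the distribution putting mass `w i` at `y i`. -/
theorem sum_mul_exp_le_of_mem_Icc {ι : Type*} [Fintype ι] {w y : ι → ℝ} (hw : ∀ i, 0 ≤ w i)
    (hw1 : ∑ i, w i = 1) {a b : ℝ} (hy : ∀ i, y i ∈ Set.Icc a b) (t : ℝ) :
    ∑ i, w i * exp (t * y i) ≤ exp (t * ∑ i, w i * y i + (b - a) ^ 2 * t ^ 2 / 8) := by
  let _ : MeasurableSpace ι := ⊤
  have : MeasurableSingletonClass ι := ⟨fun _ => trivial⟩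
  set ν : Measure ι := ∑ i, ENNReal.ofReal (w i) • Measure.dirac i
  have : IsProbabilityMeasure ν := ⟨by
    simp [ν, ← ENNReal.ofReal_sum_of_nonneg fun i _ => hw i, hw1]⟩
  have hν (j : ι) : ν.real {j} = w j := by
    classical
    simp [ν, measureReal_def, Set.indicator, hw]
  have hint (f : ι → ℝ) : ∫ i, f i ∂ν = ∑ i, w i * f i := by
    simp [integral_fintype (μ := ν) Integrable.of_finite, hν]
  have hoeffding := (hasSubgaussianMGF_of_mem_Icc (X := y) (μ := ν)
    (measurable_of_finite _).aemeasurable (ae_of_all _ hy)).mgf_le t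
  simp only [sub_eq_add_neg, mgf_add_const] at hoeffding
  simp only [mgf, hint, NNReal.coe_pow, NNReal.coe_div, coe_nnnorm,
    norm_eq_abs, div_pow, sq_abs, NNReal.coe_ofNat] at hoeffding
  calc ∑ i, w i * exp (t * y i)
      = (∑ i, w i * exp (t * y i)) * exp (t * -∑ i, w i * y i) * exp (t * ∑ i, w i * y i) := by
        rw [mul_assoc, ← exp_add]; simp
    _ ≤ exp ((b + -a) ^ 2 / 2 ^ 2 * t ^ 2 / 2) * exp (t * ∑ i, w i * y i) := by gcongr
    _ = exp (t * ∑ i, w i * y i + (b - a) ^ 2 * t ^ 2 / 8) := by rw [← exp_add]; ring_nf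

theorem three_point_mgf_le {a b c : ℝ} (ha : 0 ≤ a) (hb : 0 ≤ b) (hc : 0 ≤ c) (habc : a + b + c = 1)
    (t : ℝ) : a * exp t + b * exp (-t) + c ≤ exp (t * (a - b) + t ^ 2 / 2) := by
  have := sum_mul_exp_le_of_mem_Icc (w := ![a, b, c]) (y := ![1, -1, 0]) (a := -1) (b := 1)
    (by simp [Fin.forall_fin_succ, ha, hb, hc]) (by simp [Fin.sum_univ_three, habc])
    (by simp [Fin.forall_fin_succ]) t
  simp [Fin.sum_univ_three] at this
  convert this using 2
  ring

theorem measure_le_sum_measure_preimage_singleton {Ω β : Type*} [MeasurableSpace Ω]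
    (μ : Measure Ω) {f : Ω → β} {s : Finset β} (hf : ∀ ω, f ω ∈ s) (P : β → Prop)
    [DecidablePred P] :
    μ {ω | P (f ω)} ≤ ∑ c ∈ s with P c, μ (f ⁻¹' {c}) :=
  calc μ {ω | P (f ω)} ≤ μ (⋃ c ∈ s.filter P, f ⁻¹' {c}) :=
        measure_mono fun ω hω => Set.mem_biUnion (mem_filter.2 ⟨hf ω, hω⟩) rfl
    _ ≤ _ := measure_biUnion_finset_le _ _

theorem sum_eq_mul_of_eq_mean {n : ℕ} {p : Fin n → ℝ} {q : ℝ} (hq : q = 1 / n * ∑ i, p i) :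
    ∑ i, p i = n * q := by
  obtain rfl | hn := Nat.eq_zero_or_pos n
  · simp
  · rw [hq]; field_simp

namespace Crowdsourcing

def majorityVote {ι : Type*} [Fintype ι] (x : ι → ℤ) (z : ℤ) : ℤ :=
  if 0 < ∑ i, x i then 1 else if ∑ i, x i < 0 then -1 else z

def signs : Finset ℤ := {1, -1}

def labels : Finset ℤ := {-1, 0, 1}

def outcomes (n : ℕ) : Finset (ℤ × (Fin n → ℤ) × ℤ) :=
  signs ×ˢ Fintype.piFinset (fun _ => labels) ×ˢ signs

def labelProb (α p : ℝ) (g v : ℤ) : ℝ :=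
  if v = g then α * (1 - p) else if v = -g then α * p else 1 - α

theorem taskScore_eq_half_mul_prod (n : ℕ) (α : ℝ) (p : Fin n → ℝ) (g : ℤ) (x : Fin n → ℤ) :
    taskScore n α p g x = 1 / 2 * ∏ i, labelProb α (p i) g (x i) := rfl

theorem labelProb_nonneg {α p : ℝ} (hα : α ∈ Set.Icc (0 : ℝ) 1) (hp : p ∈ Set.Icc (0 : ℝ) 1)
    (g v : ℤ) : 0 ≤ labelProb α p g v := by
  obtain ⟨hα0, hα1⟩ := hα
  obtain ⟨hp0, hp1⟩ := hp
  unfold labelProb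
  split_ifs <;> nlinarith

theorem taskScore_nonneg {n : ℕ} {α : ℝ} {p : Fin n → ℝ} (hα : α ∈ Set.Icc (0 : ℝ) 1)
    (hp : ∀ i, p i ∈ Set.Icc (0 : ℝ) 1) (g : ℤ) (x : Fin n → ℤ) : 0 ≤ taskScore n α p g x := by
  rw [taskScore_eq_half_mul_prod]
  exact mul_nonneg (by norm_num) (prod_nonneg fun i _ => labelProb_nonneg hα (hp i) g (x i))

theorem sum_labelProb_mul_exp (α p : ℝ) {g : ℤ} (hg : g ∈ signs) (t : ℝ) :
    ∑ v ∈ labels, labelProb α p g v * exp (-(t * g * v)) =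
      α * (1 - p) * exp (-t) + α * p * exp t + (1 - α) := by
  simp only [signs, mem_insert, mem_singleton] at hg
  rcases hg with rfl | rfl <;> simp [labels, labelProb] <;> ring

theorem sum_taskScore_mul_exp (n : ℕ) (α : ℝ) (p : Fin n → ℝ) {g : ℤ} (hg : g ∈ signs) (t : ℝ) :
    ∑ x ∈ Fintype.piFinset (fun _ => labels), taskScore n α p g x * exp (-(t * g * ∑ i, (x i : ℝ)))
      = 1 / 2 * ∏ i, (α * (1 - p i) * exp (-t) + α * p i * exp t + (1 - α)) := by
  simp_rw [← sum_labelProb_mul_exp _ _ hg t, prod_univ_sum, taskScore_eq_half_mul_prod, mul_sum,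
    ← sum_neg_distrib, exp_sum, mul_assoc, prod_mul_distrib]

theorem sum_signs_error_le_exp {ι : Type*} [Fintype ι] {g : ℤ} (hg : g ∈ signs) (x : ι → ℤ)
    {t : ℝ} (ht : 0 ≤ t) :
    ∑ z ∈ signs, (if majorityVote x z ≠ g then (1 / 2 : ℝ) else 0)
      ≤ exp (-(t * g * ∑ i, (x i : ℝ))) := by
  have hcast : ∑ i, (x i : ℝ) = ((∑ i, x i : ℤ) : ℝ) := (Int.cast_sum _ _).symm
  unfold majorityVote
  rw [hcast]
  generalize ∑ i, x i = s
  simp only [signs, mem_insert, mem_singleton] at hg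
  rcases hg with rfl | rfl <;> rcases lt_trichotomy s 0 with hs | rfl | hs
  all_goals first | simp [signs, hs, lt_asymm hs] | simp [signs]
  all_goals first
    | exact ht | positivity | exact mul_nonpos_of_nonneg_of_nonpos ht (by exact_mod_cast hs.le)
    | norm_num

theorem sum_error_taskScore_le {n : ℕ} {α : ℝ} {p : Fin n → ℝ} (hα : α ∈ Set.Icc (0 : ℝ) 1)
    (hp : ∀ i, p i ∈ Set.Icc (0 : ℝ) 1) {t : ℝ} (ht : 0 ≤ t) :
    ∑ c ∈ outcomes n with majorityVote c.2.1 c.2.2 ≠ c.1, 1 / 2 * taskScore n α p c.1 c.2.1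
      ≤ ∏ i, (α * (1 - p i) * exp (-t) + α * p i * exp t + (1 - α)) := by
  calc _ = ∑ g ∈ signs, ∑ x ∈ Fintype.piFinset (fun _ => labels), taskScore n α p g x *
        ∑ z ∈ signs, (if majorityVote x z ≠ g then (1 / 2 : ℝ) else 0) := by
        simp_rw [sum_filter, outcomes, sum_product, mul_sum, mul_ite, mul_zero, mul_comm]
    _ ≤ ∑ g ∈ signs, ∑ x ∈ Fintype.piFinset (fun _ => labels), taskScore n α p g x *
        exp (-(t * g * ∑ i, (x i : ℝ))) := by
        gcongr with g hg x
        · exact taskScore_nonneg hα hp g x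
        · exact sum_signs_error_le_exp hg x ht
    _ = ∑ g ∈ signs, 1 / 2 * ∏ i, (α * (1 - p i) * exp (-t) + α * p i * exp t + (1 - α)) :=
        sum_congr rfl fun g hg => sum_taskScore_mul_exp n α p hg t
    _ = _ := by simp [signs]

theorem labeller_mgf_le {α p : ℝ} (hα : α ∈ Set.Icc (0 : ℝ) 1) (hp : p ∈ Set.Icc (0 : ℝ) 1)
    (t : ℝ) : α * (1 - p) * exp (-t) + α * p * exp t + (1 - α)
      ≤ exp (-(t * (α * (1 - 2 * p))) + t ^ 2 / 2) := by
  obtain ⟨hα0, hα1⟩ := hα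
  obtain ⟨hp0, hp1⟩ := hp
  have := three_point_mgf_le (a := α * (1 - p)) (b := α * p) (c := 1 - α) (by nlinarith)
    (by positivity) (by linarith) (by ring) (-t)
  rw [neg_neg] at this
  convert this using 2
  ring

theorem prod_labeller_mgf_le {n : ℕ} {α : ℝ} {p : Fin n → ℝ} (hα : α ∈ Set.Icc (0 : ℝ) 1)
    (hp : ∀ i, p i ∈ Set.Icc (0 : ℝ) 1) {q : ℝ} (hq : ∑ i, p i = n * q) (t : ℝ) :
    ∏ i, (α * (1 - p i) * exp (-t) + α * p i * exp t + (1 - α))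
      ≤ exp (-(n * t * (α * (1 - 2 * q))) + n * t ^ 2 / 2) :=
  calc _ ≤ ∏ i, exp (-(t * (α * (1 - 2 * p i))) + t ^ 2 / 2) := by
        refine prod_le_prod (fun i _ => ?_) fun i _ => labeller_mgf_le hα (hp i) t
        rw [← sum_labelProb_mul_exp α (p i) (g := 1) (by simp [signs]) t]
        exact sum_nonneg fun v _ => mul_nonneg (labelProb_nonneg hα (hp i) 1 v) (exp_pos _).le
    _ = _ := by
        rw [← exp_sum]
        congr 1
        simp only [sum_add_distrib, sum_neg_distrib, ← mul_sum, sum_sub_distrib, sum_const,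
          card_univ, Fintype.card_fin, nsmul_eq_mul, mul_one, hq]
        ring

end Crowdsourcing

open Crowdsourcing in
theorem majority_vote_error_bound_general
    {Ω : Type*} [MeasurableSpace Ω] (μ : Measure Ω)
    (n : ℕ) (α : ℝ) (hα : α ∈ Set.Ioc (0 : ℝ) 1)
    (p : Fin n → ℝ) (hp : ∀ i, p i ∈ Set.Icc (0 : ℝ) 1)
    (q : ℝ) (hq : q = (1 / (n : ℝ)) * ∑ i, p i) (hqlt : q < 1 / 2)
    (G : Ω → ℤ) (X : Fin n → Ω → ℤ) (Z : Ω → ℤ)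
    (hGval : ∀ ω, G ω = 1 ∨ G ω = -1)
    (hXval : ∀ i ω, X i ω = -1 ∨ X i ω = 0 ∨ X i ω = 1)
    (hZval : ∀ ω, Z ω = 1 ∨ Z ω = -1)
    -- joint law of (G, X):
    (hlaw : ∀ (g : ℤ) (x : Fin n → ℤ), (g = 1 ∨ g = -1) →
      (∀ i, x i = -1 ∨ x i = 0 ∨ x i = 1) →
      μ {ω | G ω = g ∧ ∀ i, X i ω = x i} = ENNReal.ofReal (taskScore n α p g x))
    -- Z is uniform on {+1,−1} and independent of (G, X):
    (hZind : ∀ (z g : ℤ) (x : Fin n → ℤ), (z = 1 ∨ z = -1) →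
      μ {ω | Z ω = z ∧ G ω = g ∧ ∀ i, X i ω = x i}
        = (1 / 2 : ENNReal) * μ {ω | G ω = g ∧ ∀ i, X i ω = x i})
    -- the majority vote Ĝ with fair random tie-breaking, S = Σ_i X_i:
    (Ghat : Ω → ℤ)
    (hGhat : ∀ ω, Ghat ω =
      if 0 < ∑ i, X i ω then 1 else if (∑ i, X i ω) < 0 then -1 else Z ω) :
    μ {ω | Ghat ω ≠ G ω}
      ≤ ENNReal.ofReal (Real.exp (-((n : ℝ) / 2) * (α * (1 - 2 * q)) ^ 2)) := by
  have hα' : α ∈ Set.Icc (0 : ℝ) 1 := Set.Ioc_subset_Icc_self hα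
  have ht : 0 ≤ α * (1 - 2 * q) := mul_nonneg hα.1.le (by linarith)
  let f (ω : Ω) : ℤ × (Fin n → ℤ) × ℤ := (G ω, fun i => X i ω, Z ω)
  have hf (ω : Ω) : f ω ∈ outcomes n := by simp [outcomes, signs, labels, f, hGval, hXval, hZval]
  have herr : {ω | Ghat ω ≠ G ω} = {ω | majorityVote (f ω).2.1 (f ω).2.2 ≠ (f ω).1} := by
    ext ω; simp only [Set.mem_ofPred_eq, hGhat, majorityVote, f]
  have hfiber (c) (hc : c ∈ outcomes n) :
      μ (f ⁻¹' {c}) = ENNReal.ofReal (1 / 2 * taskScore n α p c.1 c.2.1) := by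
    obtain ⟨g, x, z⟩ := c
    simp only [outcomes, signs, labels, mem_product, Fintype.mem_piFinset, mem_insert,
      mem_singleton] at hc
    have hpre : f ⁻¹' {(g, x, z)} = {ω | Z ω = z ∧ G ω = g ∧ ∀ i, X i ω = x i} := by
      ext ω; simp [f, funext_iff]; tauto
    rw [hpre, hZind z g x hc.2.2, hlaw g x hc.1 hc.2.1, ENNReal.ofReal_mul (by norm_num),
      ENNReal.ofReal_div_of_pos two_pos]
    simp
  calc μ {ω | Ghat ω ≠ G ω}
      ≤ ∑ c ∈ outcomes n with majorityVote c.2.1 c.2.2 ≠ c.1, μ (f ⁻¹' {c}) :=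
        herr ▸ measure_le_sum_measure_preimage_singleton μ hf _
    _ = ENNReal.ofReal (∑ c ∈ outcomes n with majorityVote c.2.1 c.2.2 ≠ c.1,
          1 / 2 * taskScore n α p c.1 c.2.1) := by
        rw [ENNReal.ofReal_sum_of_nonneg fun c _ =>
          mul_nonneg (by norm_num) (taskScore_nonneg hα' hp _ _)]
        exact sum_congr rfl fun c hc => hfiber c (mem_filter.1 hc).1
    _ ≤ ENNReal.ofReal (∏ i, (α * (1 - p i) * exp (-(α * (1 - 2 * q))) +
          α * p i * exp (α * (1 - 2 * q)) + (1 - α))) :=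
        ENNReal.ofReal_le_ofReal (sum_error_taskScore_le hα' hp ht)
    _ ≤ _ := by
        refine ENNReal.ofReal_le_ofReal
          ((prod_labeller_mgf_le hα' hp (sum_eq_mul_of_eq_mean hq) _).trans_eq ?_)
        congr 1
        ring

/-- the majority vote with fair random tie-breaking has error probability at most
`exp(−(n/2)(α(1−2q))²)` when the average error probability `q` is less than `1/2`. -/
theorem majority_vote_error_bound
    {Ω : Type*} [MeasurableSpace Ω] (μ : Measure Ω) [IsProbabilityMeasure μ]
    (n : ℕ) (hn : 2 < n) (α : ℝ) (hα : α ∈ Set.Ioc (0 : ℝ) 1)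
    (p : Fin n → ℝ) (hp : ∀ i, p i ∈ Set.Icc (0 : ℝ) 1)
    (q : ℝ) (hq : q = (1 / (n : ℝ)) * ∑ i, p i) (hqlt : q < 1 / 2)
    (G : Ω → ℤ) (X : Fin n → Ω → ℤ) (Z : Ω → ℤ)
    (hGmeas : Measurable G) (hXmeas : ∀ i, Measurable (X i)) (hZmeas : Measurable Z)
    (hGval : ∀ ω, G ω = 1 ∨ G ω = -1)
    (hXval : ∀ i ω, X i ω = -1 ∨ X i ω = 0 ∨ X i ω = 1)
    (hZval : ∀ ω, Z ω = 1 ∨ Z ω = -1)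
    -- joint law of (G, X):
    (hlaw : ∀ (g : ℤ) (x : Fin n → ℤ), (g = 1 ∨ g = -1) →
      (∀ i, x i = -1 ∨ x i = 0 ∨ x i = 1) →
      μ {ω | G ω = g ∧ ∀ i, X i ω = x i} = ENNReal.ofReal (taskScore n α p g x))
    -- Z is uniform on {+1,−1} and independent of (G, X):
    (hZind : ∀ (z g : ℤ) (x : Fin n → ℤ), (z = 1 ∨ z = -1) →
      μ {ω | Z ω = z ∧ G ω = g ∧ ∀ i, X i ω = x i}
        = (1 / 2 : ENNReal) * μ {ω | G ω = g ∧ ∀ i, X i ω = x i})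
    -- the majority vote Ĝ with fair random tie-breaking, S = Σ_i X_i:
    (Ghat : Ω → ℤ)
    (hGhat : ∀ ω, Ghat ω =
      if 0 < ∑ i, X i ω then 1 else if (∑ i, X i ω) < 0 then -1 else Z ω) :
    μ {ω | Ghat ω ≠ G ω}
      ≤ ENNReal.ofReal (Real.exp (-((n : ℝ) / 2) * (α * (1 - 2 * q)) ^ 2)) :=
  majority_vote_error_bound_general μ n α hα p hp q hq hqlt G X Z hGval hXval hZval hlaw hZind Ghat
    hGhat
end

section
/- Fix an integer n > 2, α ∈ (0,1] and p ∈ [0,1]^n. In the crowdsourcing model, let â_i(t) = (1/(t(n−1)α²)) Σ_{s=1}^t Σ_{j≠i} 1{X_i(s) X_j(s) = 1}, and let a_i = (1/(n−1)) Σ_{j≠i} (p_i p_j + (1−p_i)(1−p_j)). Then for every t ≥ 1 and every ε > 0: P( max_{i=1,…,n} |â_i(t) − a_i| ≥ ε ) ≤ 2n · exp(−2 ε² α⁴ t). -/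
open MeasureTheory Finset
open scoped Classical

/-- Empirical agreement rate `â_i(t)` of labeller `i` over tasks `1,…,t`. -/
noncomputable def ahat {Ω : Type*} (n : ℕ) (α : ℝ) (X : ℕ → Fin n → Ω → ℤ)
    (t : ℕ) (i : Fin n) (ω : Ω) : ℝ :=
  (1 / ((t : ℝ) * ((n : ℝ) - 1) * α ^ 2)) * ∑ s ∈ Finset.Icc 1 t,
    ∑ j ∈ Finset.univ.erase i, (if X s i ω * X s j ω = 1 then (1 : ℝ) else 0)

/-!
Given the ground truth of a task, two labellers agree exactly when both are right or both are
wrong, so the number of agreements of labeller `i` on one task lies in `[0, n - 1]` and has mean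
`α² Σ_{j ≠ i} (p_i p_j + (1 - p_i)(1 - p_j)) = (n - 1) α² a_i`. The hypothesis on the joint law of
the tasks identifies the law of the first `t` tasks with the `t`-fold product of the one-task law,
so `t (n - 1) α² (â_i(t) - a_i)` is a sum of `t` independent centred variables with range `n - 1`.
Hoeffding's inequality bounds each two-sided deviation by `2 exp (-2 ε² α⁴ t)`, and a union bound
over the `n` labellers concludes.
-/

open ProbabilityTheory

@[to_additive sum_Icc_one_eq_sum_fin]
lemma prod_Icc_one_eq_prod_fin {M : Type*} [CommMonoid M] (t : ℕ) (f : ℕ → M) :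
    ∏ s ∈ Icc 1 t, f s = ∏ k : Fin t, f (k + 1) := by
  rw [← Ico_add_one_right_eq_Icc, prod_Ico_eq_prod_range, Nat.add_sub_cancel,
    ← Fin.prod_univ_eq_prod_range (fun k => f (1 + k))]
  simp only [add_comm]

lemma sum_piFinset_prod_mul_apply_mul_apply {ι β R : Type*} [Fintype ι] [DecidableEq ι]
    [CommSemiring R] (S : Finset β) (φ : ι → β → R) (hφ : ∀ k, ∑ a ∈ S, φ k a = 1)
    {i j : ι} (hij : i ≠ j) (u v : β → R) :
    ∑ x ∈ Fintype.piFinset fun _ => S, (∏ k, φ k (x k)) * (u (x i) * v (x j))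
      = (∑ a ∈ S, φ i a * u a) * (∑ a ∈ S, φ j a * v a) := by
  set w : ι → β → R := fun k => if k = i then u else if k = j then v else 1
  have hw : ∀ x : ι → β, ∏ k, w k (x k) = u (x i) * v (x j) := by
    intro x
    rw [prod_eq_mul i j hij (fun k _ hk => by simp [w, hk.1, hk.2]) (by simp) (by simp)]
    simp [w, hij.symm]
  calc ∑ x ∈ Fintype.piFinset fun _ => S, (∏ k, φ k (x k)) * (u (x i) * v (x j))
      = ∏ k, ∑ a ∈ S, φ k a * w k a := by
        simp_rw [← hw, ← prod_mul_distrib]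
        exact sum_prod_piFinset S fun k a => φ k a * w k a
    _ = (∑ a ∈ S, φ i a * u a) * (∑ a ∈ S, φ j a * v a) := by
        rw [prod_eq_mul i j hij (fun k _ hk => by simp [w, hk.1, hk.2, hφ]) (by simp) (by simp)]
        simp [w, hij.symm]

lemma ite_mul_eq_one_eq_sum (u v : ℤ) :
    (if u * v = 1 then (1 : ℝ) else 0)
      = ∑ c ∈ ({1, -1} : Finset ℤ), (if u = c then 1 else 0) * (if v = c then 1 else 0) := by
  simp only [sum_pair (show (1 : ℤ) ≠ -1 by norm_num), Int.mul_eq_one_iff_eq_one_or_neg_one]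
  by_cases hu : u = 1 <;> by_cases hv : v = 1 <;> by_cases hu' : u = -1 <;> by_cases hv' : v = -1 <;>
    simp_all

section Hoeffding

variable {β : Type*} [MeasurableSpace β] {ν : Measure β} [IsProbabilityMeasure ν] {Z : β → ℝ}
  {a b : ℝ}

lemma measureReal_pi_sum_sub_integral_ge_le (hZ : Measurable Z) (hab : ∀ x, Z x ∈ Set.Icc a b)
    (t : ℕ) {r : ℝ} (hr : 0 ≤ r) :
    (Measure.pi fun _ : Fin t => ν).real {y | r ≤ ∑ k, (Z (y k) - ν[Z])}
      ≤ Real.exp (-2 * r ^ 2 / (t * (b - a) ^ 2)) := by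
  have hsubG : ∀ k : Fin t, HasSubgaussianMGF (fun y : Fin t → β => Z (y k) - ν[Z])
      ((‖b - a‖₊ / 2) ^ 2) (Measure.pi fun _ : Fin t => ν) := by
    intro k
    have h := hasSubgaussianMGF_of_mem_Icc (μ := Measure.pi fun _ : Fin t => ν)
      (X := fun y => Z (y k)) (hZ.comp (measurable_pi_apply k)).aemeasurable
      (ae_of_all _ fun y => hab (y k))
    rwa [integral_comp_eval hZ.aestronglyMeasurable] at h
  have hindep : iIndepFun (fun (k : Fin t) (y : Fin t → β) => Z (y k) - ν[Z])
      (Measure.pi fun _ : Fin t => ν) :=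
    iIndepFun_pi (X := fun _ x => Z x - ν[Z]) fun _ => (hZ.sub_const _).aemeasurable
  refine (HasSubgaussianMGF.measure_sum_ge_le_of_iIndepFun hindep (s := univ)
    (fun k _ => hsubG k) hr).trans_eq ?_
  congr 1
  simp only [sum_const, card_univ, Fintype.card_fin, nsmul_eq_mul, NNReal.coe_mul,
    NNReal.coe_natCast, NNReal.coe_pow, NNReal.coe_div, coe_nnnorm, Real.norm_eq_abs,
    NNReal.coe_ofNat, div_pow, sq_abs]
  rw [show (2 : ℝ) * (t * ((b - a) ^ 2 / 2 ^ 2)) = t * (b - a) ^ 2 / 2 by ring, div_div_eq_mul_div]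
  ring

lemma measure_pi_abs_sum_sub_integral_ge_le (hZ : Measurable Z) (hab : ∀ x, Z x ∈ Set.Icc a b)
    (t : ℕ) {r : ℝ} (hr : 0 ≤ r) :
    (Measure.pi fun _ : Fin t => ν) {y | r ≤ |∑ k, (Z (y k) - ν[Z])|}
      ≤ ENNReal.ofReal (2 * Real.exp (-2 * r ^ 2 / (t * (b - a) ^ 2))) := by
  have hupper := measureReal_pi_sum_sub_integral_ge_le (ν := ν) hZ hab t hr
  have hlower := measureReal_pi_sum_sub_integral_ge_le (ν := ν) hZ.neg
    (fun x => ⟨neg_le_neg (hab x).2, neg_le_neg (hab x).1⟩) t hr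
  rw [show -a - -b = b - a by ring] at hlower
  have hsplit : {y : Fin t → β | r ≤ |∑ k, (Z (y k) - ν[Z])|}
      ⊆ {y | r ≤ ∑ k, (Z (y k) - ν[Z])} ∪ {y | r ≤ ∑ k, ((-Z) (y k) - ν[-Z])} := by
    intro y hy
    have hneg : ∑ k, ((-Z) (y k) - ν[-Z]) = -∑ k, (Z (y k) - ν[Z]) := by
      rw [integral_neg', ← sum_neg_distrib]
      exact sum_congr rfl fun k _ => by rw [Pi.neg_apply]; ring
    rw [Set.mem_union, Set.mem_ofPred_eq, Set.mem_ofPred_eq, hneg, ← le_abs]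
    exact hy
  rw [← ofReal_measureReal]
  refine ENNReal.ofReal_le_ofReal ?_
  calc _ ≤ _ := measureReal_mono hsplit
    _ ≤ _ := measureReal_union_le _ _
    _ ≤ _ := by linarith

end Hoeffding

def labelProb (α q : ℝ) (g a : ℤ) : ℝ :=
  if a = g then α * (1 - q) else if a = -g then α * q else 1 - α

lemma taskScore_eq_prod_labelProb (n : ℕ) (α : ℝ) (p : Fin n → ℝ) (g : ℤ) (x : Fin n → ℤ) :
    taskScore n α p g x = 1 / 2 * ∏ i, labelProb α (p i) g (x i) := rfl

lemma sum_labelProb (α q : ℝ) {g : ℤ} (hg : g ∈ ({1, -1} : Finset ℤ)) :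
    ∑ a ∈ ({-1, 0, 1} : Finset ℤ), labelProb α q g a = 1 := by
  simp only [mem_insert, mem_singleton] at hg
  rcases hg with rfl | rfl <;> norm_num [labelProb] <;> ring

def taskSupport (n : ℕ) : Finset (ℤ × (Fin n → ℤ)) :=
  {1, -1} ×ˢ Fintype.piFinset fun _ => {-1, 0, 1}

lemma mem_taskSupport {n : ℕ} (d : ℤ × (Fin n → ℤ)) :
    d ∈ taskSupport n ↔ (d.1 = 1 ∨ d.1 = -1) ∧ ∀ i, d.2 i = -1 ∨ d.2 i = 0 ∨ d.2 i = 1 := by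
  simp [taskSupport, mem_product, Fintype.mem_piFinset]

noncomputable def taskLaw (n : ℕ) (α : ℝ) (p : Fin n → ℝ) : Measure (ℤ × (Fin n → ℤ)) :=
  ∑ d ∈ taskSupport n, ENNReal.ofReal (taskScore n α p d.1 d.2) • Measure.dirac d

section TaskLaw

variable {n : ℕ} {α : ℝ} {p : Fin n → ℝ}

lemma taskScore_nonneg (hα : α ∈ Set.Icc (0 : ℝ) 1) (hp : ∀ i, p i ∈ Set.Icc (0 : ℝ) 1)
    (g : ℤ) (x : Fin n → ℤ) : 0 ≤ taskScore n α p g x := by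
  obtain ⟨hα0, hα1⟩ := hα
  refine mul_nonneg (by norm_num) (prod_nonneg fun i _ => ?_)
  obtain ⟨hp0, hp1⟩ := hp i
  split_ifs
  · exact mul_nonneg hα0 (by linarith)
  · exact mul_nonneg hα0 hp0
  · linarith

lemma sum_taskScore : ∑ d ∈ taskSupport n, taskScore n α p d.1 d.2 = 1 := by
  rw [taskSupport, sum_product]
  have hg : ∀ g ∈ ({1, -1} : Finset ℤ),
      ∑ x ∈ Fintype.piFinset (fun _ => ({-1, 0, 1} : Finset ℤ)), taskScore n α p g x = 1 / 2 := by
    intro g hg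
    simp_rw [taskScore_eq_prod_labelProb, ← mul_sum,
      sum_prod_piFinset _ fun i => labelProb α (p i) g, sum_labelProb α _ hg, prod_const_one,
      mul_one]
  rw [sum_congr rfl hg]
  norm_num

lemma taskLaw_singleton (d : ℤ × (Fin n → ℤ)) :
    taskLaw n α p {d} = if d ∈ taskSupport n then ENNReal.ofReal (taskScore n α p d.1 d.2) else 0 := by
  simp [taskLaw, Set.indicator]

lemma isProbabilityMeasure_taskLaw (hα : α ∈ Set.Icc (0 : ℝ) 1)
    (hp : ∀ i, p i ∈ Set.Icc (0 : ℝ) 1) : IsProbabilityMeasure (taskLaw n α p) := by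
  constructor
  simp only [taskLaw, Measure.coe_finsetSum, Measure.coe_smul, Finset.sum_apply, Pi.smul_apply,
    measure_univ, smul_eq_mul, mul_one]
  rw [← ENNReal.ofReal_sum_of_nonneg fun d _ => taskScore_nonneg hα hp d.1 d.2, sum_taskScore,
    ENNReal.ofReal_one]

lemma integral_taskLaw (hα : α ∈ Set.Icc (0 : ℝ) 1) (hp : ∀ i, p i ∈ Set.Icc (0 : ℝ) 1)
    (f : ℤ × (Fin n → ℤ) → ℝ) :
    ∫ d, f d ∂taskLaw n α p = ∑ d ∈ taskSupport n, taskScore n α p d.1 d.2 * f d := by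
  rw [taskLaw, integral_finsetSum_measure fun d _ =>
    (integrable_dirac (by simp)).smul_measure ENNReal.ofReal_ne_top]
  refine sum_congr rfl fun d _ => ?_
  rw [integral_smul_measure, integral_dirac, ENNReal.toReal_ofReal (taskScore_nonneg hα hp _ _),
    smul_eq_mul]

lemma sum_taskScore_mul_agree {i j : Fin n} (hij : i ≠ j) :
    ∑ d ∈ taskSupport n, taskScore n α p d.1 d.2 * (if d.2 i * d.2 j = 1 then 1 else 0)
      = α ^ 2 * (p i * p j + (1 - p i) * (1 - p j)) := by
  have hg : ∀ g ∈ ({1, -1} : Finset ℤ),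
      ∑ x ∈ Fintype.piFinset (fun _ => ({-1, 0, 1} : Finset ℤ)),
        taskScore n α p g x * (if x i * x j = 1 then 1 else 0)
      = 1 / 2 * ∑ c ∈ ({1, -1} : Finset ℤ), labelProb α (p i) g c * labelProb α (p j) g c := by
    intro g hg
    simp_rw [taskScore_eq_prod_labelProb, ite_mul_eq_one_eq_sum, mul_assoc, ← mul_sum]
    congr 1
    simp_rw [mul_sum]
    rw [sum_comm]
    refine sum_congr rfl fun c hc => ?_
    refine (sum_piFinset_prod_mul_apply_mul_apply _ _ (fun k => sum_labelProb α (p k) hg) hij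
      (fun a => if a = c then 1 else 0) (fun a => if a = c then 1 else 0)).trans ?_
    simp only [mul_ite, mul_one, mul_zero]
    simp only [mem_insert, mem_singleton] at hc
    rw [sum_ite_eq', sum_ite_eq', if_pos, if_pos] <;> rcases hc with rfl | rfl <;> simp
  rw [taskSupport, sum_product, sum_congr rfl hg]
  simp only [sum_pair (show (1 : ℤ) ≠ -1 by norm_num), labelProb]
  norm_num
  ring

def agreements (i : Fin n) (x : Fin n → ℤ) : ℝ :=
  ∑ j ∈ univ.erase i, if x i * x j = 1 then 1 else 0

lemma agreements_mem_Icc (i : Fin n) (x : Fin n → ℤ) :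
    agreements i x ∈ Set.Icc (0 : ℝ) (n - 1) := by
  refine ⟨sum_nonneg fun j _ => by positivity, ?_⟩
  calc agreements i x ≤ ∑ j ∈ univ.erase i, (1 : ℝ) :=
        sum_le_sum fun j _ => by split_ifs <;> norm_num
    _ = n - 1 := by
        rw [sum_const, card_erase_of_mem (mem_univ i), card_univ, Fintype.card_fin, nsmul_one,
          Nat.cast_pred i.pos]

lemma integral_agreements_taskLaw (hα : α ∈ Set.Icc (0 : ℝ) 1)
    (hp : ∀ i, p i ∈ Set.Icc (0 : ℝ) 1) (i : Fin n) :
    ∫ d, agreements i d.2 ∂taskLaw n α p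
      = α ^ 2 * ∑ j ∈ univ.erase i, (p i * p j + (1 - p i) * (1 - p j)) := by
  simp_rw [integral_taskLaw hα hp, agreements, mul_sum]
  rw [sum_comm]
  exact sum_congr rfl fun j hj => sum_taskScore_mul_agree (mem_erase.1 hj).1.symm

lemma measure_pi_abs_sum_agreements_sub_integral_ge_le (hα : α ∈ Set.Icc (0 : ℝ) 1)
    (hp : ∀ i, p i ∈ Set.Icc (0 : ℝ) 1) (i : Fin n) (t : ℕ) {r : ℝ} (hr : 0 ≤ r) :
    (Measure.pi fun _ : Fin t => taskLaw n α p)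
        {y | r ≤ |∑ k, (agreements i (y k).2 - ∫ d, agreements i d.2 ∂taskLaw n α p)|}
      ≤ ENNReal.ofReal (2 * Real.exp (-2 * r ^ 2 / (t * ((n : ℝ) - 1) ^ 2))) := by
  have := isProbabilityMeasure_taskLaw hα hp
  simpa using measure_pi_abs_sum_sub_integral_ge_le (ν := taskLaw n α p)
    (measurable_of_countable fun d : ℤ × (Fin n → ℤ) => agreements i d.2)
    (fun d => agreements_mem_Icc i d.2) t hr

end TaskLaw

def taskSample {Ω : Type*} {n : ℕ} (G : ℕ → Ω → ℤ) (X : ℕ → Fin n → Ω → ℤ) (t : ℕ) (ω : Ω) :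
    Fin t → ℤ × (Fin n → ℤ) :=
  fun k => (G (k + 1) ω, fun i => X (k + 1) i ω)

lemma ahat_eq_sum_agreements {Ω : Type*} {n : ℕ} (α : ℝ) (G : ℕ → Ω → ℤ)
    (X : ℕ → Fin n → Ω → ℤ) (t : ℕ) (i : Fin n) (ω : Ω) :
    ahat n α X t i ω
      = (∑ k, agreements i (taskSample G X t ω k).2) / (t * ((n : ℝ) - 1) * α ^ 2) := by
  rw [ahat, sum_Icc_one_eq_sum_fin, one_div_mul_eq_div]
  rfl

lemma ahat_sub_eq_sum_sub_integral {Ω : Type*} {n : ℕ} {α : ℝ} {p : Fin n → ℝ}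
    (hα : α ∈ Set.Ioc (0 : ℝ) 1) (hp : ∀ i, p i ∈ Set.Icc (0 : ℝ) 1) (G : ℕ → Ω → ℤ)
    (X : ℕ → Fin n → Ω → ℤ) {t : ℕ} (ht : (t : ℝ) ≠ 0) (hn : (n : ℝ) - 1 ≠ 0) (i : Fin n)
    (ω : Ω) :
    ahat n α X t i ω - 1 / ((n : ℝ) - 1) * ∑ j ∈ univ.erase i, (p i * p j + (1 - p i) * (1 - p j))
      = (∑ k, (agreements i (taskSample G X t ω k).2 - ∫ d, agreements i d.2 ∂taskLaw n α p))
        / (t * ((n : ℝ) - 1) * α ^ 2) := by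
  rw [ahat_eq_sum_agreements α G, sum_sub_distrib, sum_const, card_univ, Fintype.card_fin,
    nsmul_eq_mul, integral_agreements_taskLaw (Set.Ioc_subset_Icc_self hα) hp]
  have := hα.1.ne'
  field_simp

section Sample

variable {Ω : Type*} [MeasurableSpace Ω] {μ : Measure Ω} {n : ℕ} {α : ℝ} {p : Fin n → ℝ}
  {G : ℕ → Ω → ℤ} {X : ℕ → Fin n → Ω → ℤ}

lemma measurable_taskSample (hGmeas : ∀ s, Measurable (G s))
    (hXmeas : ∀ s i, Measurable (X s i)) (t : ℕ) : Measurable (taskSample G X t) :=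
  measurable_pi_lambda _ fun _ =>
    (hGmeas _).prodMk (measurable_pi_lambda _ fun i => hXmeas _ i)

lemma measure_taskSample_preimage_singleton
    (hlaw : ∀ (T : ℕ) (g : ℕ → ℤ) (x : ℕ → Fin n → ℤ),
      (∀ s, g s = 1 ∨ g s = -1) → (∀ s i, x s i = -1 ∨ x s i = 0 ∨ x s i = 1) →
      μ {ω | ∀ s ∈ Finset.Icc 1 T, (G s ω = g s ∧ ∀ i, X s i ω = x s i)} =
        ENNReal.ofReal (∏ s ∈ Finset.Icc 1 T, taskScore n α p (g s) (x s)))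
    {t : ℕ} {y : Fin t → ℤ × (Fin n → ℤ)} (hy : ∀ k, y k ∈ taskSupport n) :
    μ (taskSample G X t ⁻¹' {y}) = ENNReal.ofReal (∏ k, taskScore n α p (y k).1 (y k).2) := by
  -- `hlaw` is about sequences of tasks indexed by `ℕ`: extend `y` by an admissible dummy task
  set z : ℕ → ℤ × (Fin n → ℤ) := Function.extend (fun k : Fin t => (k : ℕ) + 1) y fun _ => (1, 0)
  have hinj : Function.Injective fun k : Fin t => (k : ℕ) + 1 :=
    fun k l hkl => Fin.ext (Nat.add_right_cancel hkl)
  have hz : ∀ k : Fin t, z (k + 1) = y k := hinj.extend_apply y _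
  have hz_mem : ∀ s, z s ∈ taskSupport n := by
    intro s
    by_cases hs : ∃ k : Fin t, (k : ℕ) + 1 = s
    · obtain ⟨k, rfl⟩ := hs
      exact hz k ▸ hy k
    · rw [show z s = (1, 0) from Function.extend_apply' _ _ _ hs, mem_taskSupport]
      simp
  have hpre : taskSample G X t ⁻¹' {y}
      = {ω | ∀ s ∈ Icc 1 t, G s ω = (z s).1 ∧ ∀ i, X s i ω = (z s).2 i} := by
    ext ω
    simp only [Set.mem_preimage, Set.mem_singleton_iff, funext_iff, taskSample, Prod.ext_iff]
    constructor
    · intro h s hs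
      obtain ⟨k, rfl⟩ : ∃ k : Fin t, (k : ℕ) + 1 = s := ⟨⟨s - 1, by grind⟩, by grind⟩
      simpa [hz] using h k
    · intro h k
      simpa [hz] using h (k + 1) (by simp [mem_Icc])
  rw [hpre, hlaw t (fun s => (z s).1) (fun s => (z s).2)
    (fun s => ((mem_taskSupport _).1 (hz_mem s)).1)
    (fun s => ((mem_taskSupport _).1 (hz_mem s)).2), prod_Icc_one_eq_prod_fin]
  simp only [hz]

lemma map_taskSample_eq_pi (hα : α ∈ Set.Icc (0 : ℝ) 1) (hp : ∀ i, p i ∈ Set.Icc (0 : ℝ) 1)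
    (hGmeas : ∀ s, Measurable (G s)) (hXmeas : ∀ s i, Measurable (X s i))
    (hGval : ∀ s ω, G s ω = 1 ∨ G s ω = -1)
    (hXval : ∀ s i ω, X s i ω = -1 ∨ X s i ω = 0 ∨ X s i ω = 1)
    (hlaw : ∀ (T : ℕ) (g : ℕ → ℤ) (x : ℕ → Fin n → ℤ),
      (∀ s, g s = 1 ∨ g s = -1) → (∀ s i, x s i = -1 ∨ x s i = 0 ∨ x s i = 1) →
      μ {ω | ∀ s ∈ Finset.Icc 1 T, (G s ω = g s ∧ ∀ i, X s i ω = x s i)} =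
        ENNReal.ofReal (∏ s ∈ Finset.Icc 1 T, taskScore n α p (g s) (x s)))
    (t : ℕ) :
    μ.map (taskSample G X t) = Measure.pi fun _ => taskLaw n α p := by
  have := isProbabilityMeasure_taskLaw hα hp
  refine Measure.ext_of_singleton fun y => ?_
  rw [Measure.map_apply (measurable_taskSample hGmeas hXmeas t) (measurableSet_singleton y),
    Measure.pi_singleton]
  simp_rw [taskLaw_singleton]
  by_cases hy : ∀ k, y k ∈ taskSupport n
  · rw [measure_taskSample_preimage_singleton hlaw hy,
      ENNReal.ofReal_prod_of_nonneg fun k _ => taskScore_nonneg hα hp _ _]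
    exact prod_congr rfl fun k _ => (if_pos (hy k)).symm
  · obtain ⟨k, hk⟩ := not_forall.1 hy
    rw [prod_eq_zero (mem_univ k) (if_neg hk), measure_eq_zero_iff_ae_notMem]
    refine ae_of_all _ fun ω hω => hk ?_
    rw [← Set.mem_singleton_iff.1 hω, mem_taskSupport]
    exact ⟨hGval _ ω, fun i => hXval _ i ω⟩

end Sample

theorem agreement_rate_concentration_general
    {Ω : Type*} [MeasurableSpace Ω] (μ : Measure Ω)
    (n : ℕ) (hn : 2 < n) (α : ℝ) (hα : α ∈ Set.Ioc (0 : ℝ) 1)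
    (p : Fin n → ℝ) (hp : ∀ i, p i ∈ Set.Icc (0 : ℝ) 1)
    (G : ℕ → Ω → ℤ) (X : ℕ → Fin n → Ω → ℤ)
    (hGmeas : ∀ s, Measurable (G s)) (hXmeas : ∀ s i, Measurable (X s i))
    (hGval : ∀ s ω, G s ω = 1 ∨ G s ω = -1)
    (hXval : ∀ s i ω, X s i ω = -1 ∨ X s i ω = 0 ∨ X s i ω = 1)
    -- tasks are i.i.d. with the crowdsourcing per-task law:
    (hlaw : ∀ (T : ℕ) (g : ℕ → ℤ) (x : ℕ → Fin n → ℤ),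
      (∀ s, g s = 1 ∨ g s = -1) → (∀ s i, x s i = -1 ∨ x s i = 0 ∨ x s i = 1) →
      μ {ω | ∀ s ∈ Finset.Icc 1 T, (G s ω = g s ∧ ∀ i, X s i ω = x s i)} =
        ENNReal.ofReal (∏ s ∈ Finset.Icc 1 T, taskScore n α p (g s) (x s)))
    -- true agreement rates:
    (a : Fin n → ℝ)
    (ha : ∀ i, a i = (1 / ((n : ℝ) - 1)) * ∑ j ∈ Finset.univ.erase i,
      (p i * p j + (1 - p i) * (1 - p j)))
    (t : ℕ) (ht : 1 ≤ t) (ε : ℝ) (hε : 0 < ε) :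
    μ {ω | ∃ i, ε ≤ |ahat n α X t i ω - a i|}
      ≤ ENNReal.ofReal (2 * (n : ℝ) * Real.exp (-2 * ε ^ 2 * α ^ 4 * (t : ℝ))) := by
  have hα' : α ∈ Set.Icc (0 : ℝ) 1 := Set.Ioc_subset_Icc_self hα
  have ht0 : (0 : ℝ) < t := by exact_mod_cast ht
  have hn1 : (0 : ℝ) < n - 1 := by
    have : (2 : ℝ) < n := by exact_mod_cast hn
    linarith
  have hK : 0 < (t : ℝ) * (n - 1) * α ^ 2 := mul_pos (mul_pos ht0 hn1) (pow_pos hα.1 2)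
  have hevent : {ω | ∃ i, ε ≤ |ahat n α X t i ω - a i|} = taskSample G X t ⁻¹' ⋃ i,
      {y | t * (n - 1) * α ^ 2 * ε
        ≤ |∑ k, (agreements i (y k).2 - ∫ d, agreements i d.2 ∂taskLaw n α p)|} := by
    ext ω
    simp only [Set.mem_ofPred_eq, Set.mem_preimage, Set.mem_iUnion, ha,
      ahat_sub_eq_sum_sub_integral hα hp G X ht0.ne' hn1.ne', abs_div, abs_of_pos hK,
      le_div_iff₀ hK, mul_comm ε]
  rw [hevent, ← Measure.map_apply (measurable_taskSample hGmeas hXmeas t)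
    (Set.to_countable _).measurableSet, map_taskSample_eq_pi hα' hp hGmeas hXmeas hGval hXval hlaw]
  calc _ ≤ _ := measure_iUnion_fintype_le _ _
    _ ≤ ∑ _i : Fin n, ENNReal.ofReal (2 * Real.exp (-2 * ε ^ 2 * α ^ 4 * t)) := by
        refine sum_le_sum fun i _ => (measure_pi_abs_sum_agreements_sub_integral_ge_le hα' hp i t
          (mul_pos hK hε).le).trans_eq ?_
        congr 3
        field_simp
    _ = _ := by
        rw [sum_const, card_univ, Fintype.card_fin, nsmul_eq_mul, ← ENNReal.ofReal_natCast,
          ← ENNReal.ofReal_mul (by positivity), ← mul_assoc, mul_comm (n : ℝ) 2]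

/-- concentration of the empirical agreement rates:
`P( max_i |â_i(t) − a_i| ≥ ε ) ≤ 2n exp(−2ε²α⁴t)`. -/
theorem agreement_rate_concentration
    {Ω : Type*} [MeasurableSpace Ω] (μ : Measure Ω) [IsProbabilityMeasure μ]
    (n : ℕ) (hn : 2 < n) (α : ℝ) (hα : α ∈ Set.Ioc (0 : ℝ) 1)
    (p : Fin n → ℝ) (hp : ∀ i, p i ∈ Set.Icc (0 : ℝ) 1)
    (G : ℕ → Ω → ℤ) (X : ℕ → Fin n → Ω → ℤ)
    (hGmeas : ∀ s, Measurable (G s)) (hXmeas : ∀ s i, Measurable (X s i))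
    (hGval : ∀ s ω, G s ω = 1 ∨ G s ω = -1)
    (hXval : ∀ s i ω, X s i ω = -1 ∨ X s i ω = 0 ∨ X s i ω = 1)
    -- tasks are i.i.d. with the crowdsourcing per-task law:
    (hlaw : ∀ (T : ℕ) (g : ℕ → ℤ) (x : ℕ → Fin n → ℤ),
      (∀ s, g s = 1 ∨ g s = -1) → (∀ s i, x s i = -1 ∨ x s i = 0 ∨ x s i = 1) →
      μ {ω | ∀ s ∈ Finset.Icc 1 T, (G s ω = g s ∧ ∀ i, X s i ω = x s i)} =
        ENNReal.ofReal (∏ s ∈ Finset.Icc 1 T, taskScore n α p (g s) (x s)))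
    -- true agreement rates:
    (a : Fin n → ℝ)
    (ha : ∀ i, a i = (1 / ((n : ℝ) - 1)) * ∑ j ∈ Finset.univ.erase i,
      (p i * p j + (1 - p i) * (1 - p j)))
    (t : ℕ) (ht : 1 ≤ t) (ε : ℝ) (hε : 0 < ε) :
    μ {ω | ∃ i, ε ≤ |ahat n α X t i ω - a i|}
      ≤ ENNReal.ofReal (2 * (n : ℝ) * Real.exp (-2 * ε ^ 2 * α ^ 4 * (t : ℝ))) :=
  agreement_rate_concentration_general μ n hn α hα p hp G X hGmeas hXmeas hGval hXval hlaw a ha t ht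
    ε hε
end

section
/- Let n ≥ 1 be an integer and p ∈ (0,1)^n with η = min_{i} p_i(1−p_i) > 0. Let p̂ ∈ ℝ^n satisfy max_i |p̂_i − p_i| ≤ η/2. Then p̂ ∈ (0,1)^n, and with w_i = log(1/p_i − 1) and ŵ_i = log(1/p̂_i − 1) one has (1/n) Σ_{i=1}^n |ŵ_i − w_i| ≤ (4/η) · max_{i=1,…,n} |p̂_i − p_i|. -/
open Finset

private lemma abs_log_sub_log_le' {a b : ℝ} (ha : 0 < a) (hb : 0 < b) :
    |Real.log a - Real.log b| ≤ |a - b| / min a b := by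
  wlog h : b ≤ a generalizing a b
  · rw [abs_sub_comm, abs_sub_comm a b, min_comm]
    exact this hb ha (le_of_not_ge h)
  rw [abs_of_nonneg (sub_nonneg.2 (Real.log_le_log hb h)),
    abs_of_nonneg (sub_nonneg.2 h), min_eq_right h,
    ← Real.log_div ha.ne' hb.ne']
  have h1 := Real.log_le_sub_one_of_pos (div_pos ha hb)
  have h2 : a / b - 1 = (a - b) / b := by field_simp
  linarith

/-- if `max_i |p̂_i − p_i| ≤ η/2` with `η = min_i p_i(1−p_i) > 0`, then
`p̂ ∈ (0,1)^n` and the average weight estimation error satisfies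
`(1/n) Σ_i |ŵ_i − w_i| ≤ (4/η) max_i |p̂_i − p_i|`. -/
theorem weight_estimation_error
    (n : ℕ) (hn : 1 ≤ n)
    (p : Fin n → ℝ) (hp : ∀ i, p i ∈ Set.Ioo (0 : ℝ) 1)
    (η : ℝ) (hη : η = ⨅ i, p i * (1 - p i)) (hηpos : 0 < η)
    (phat : Fin n → ℝ) (hclose : ∀ i, |phat i - p i| ≤ η / 2) :
    (∀ i, phat i ∈ Set.Ioo (0 : ℝ) 1) ∧
    (1 / (n : ℝ)) * ∑ i, |Real.log (1 / phat i - 1) - Real.log (1 / p i - 1)|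
      ≤ (4 / η) * ⨆ i, |phat i - p i| := by
  have hnpos : (0 : ℝ) < n := by exact_mod_cast hn
  haveI : Nonempty (Fin n) := ⟨⟨0, hn⟩⟩
  have hηle : ∀ i, η ≤ p i * (1 - p i) := fun i =>
    hη ▸ ciInf_le (Finite.bddBelow_range _) i
  set M := ⨆ i, |phat i - p i| with hM
  have hMle : ∀ i, |phat i - p i| ≤ M := fun i =>
    le_ciSup (f := fun j => |phat j - p j|) (Finite.bddAbove_range _) i
  have hM0 : 0 ≤ M := le_trans (abs_nonneg _) (hMle ⟨0, hn⟩)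
  -- bounds on phat
  have hlo : ∀ i, p i / 2 ≤ phat i := by
    intro i
    have h := abs_le.1 (hclose i)
    have hq := hp i
    have := hηle i
    nlinarith [hq.1, hq.2]
  have hhi : ∀ i, phat i ≤ 1 - (1 - p i) / 2 := by
    intro i
    have h := abs_le.1 (hclose i)
    have hq := hp i
    have := hηle i
    nlinarith [hq.1, hq.2]
  have hmem : ∀ i, phat i ∈ Set.Ioo (0 : ℝ) 1 := by
    intro i
    have hq := hp i
    constructor
    · linarith [hlo i, hq.1]
    · linarith [hhi i, hq.2]
  refine ⟨hmem, ?_⟩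
  have key : ∀ i, |Real.log (1 / phat i - 1) - Real.log (1 / p i - 1)| ≤ (4 / η) * M := by
    intro i
    obtain ⟨hq0, hq1⟩ := hp i
    obtain ⟨hqh0, hqh1⟩ := hmem i
    set a := 1 / phat i - 1 with ha'
    set b := 1 / p i - 1 with hb'
    have ha : 0 < a := by
      rw [ha']
      have : 1 < 1 / phat i := by rw [lt_div_iff₀ hqh0]; linarith
      linarith
    have hb : 0 < b := by
      rw [hb']
      have : 1 < 1 / p i := by rw [lt_div_iff₀ hq0]; linarith
      linarith
    have habdiff : a - b = (p i - phat i) / (phat i * p i) := by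
      rw [ha', hb']; field_simp; ring
    have hab : |a - b| = |phat i - p i| / (phat i * p i) := by
      rw [habdiff, abs_div, abs_of_pos (mul_pos hqh0 hq0), abs_sub_comm]
    have hd : (0 : ℝ) < η / (2 * (phat i * p i)) := by positivity
    have hmina : η / (2 * (phat i * p i)) ≤ a := by
      rw [div_le_iff₀ (by positivity), ha']
      have h2 := hhi i
      have h3 := hηle i
      have e : (1 / phat i - 1) * (2 * (phat i * p i)) = 2 * p i * (1 - phat i) := by
        field_simp
      rw [e]; nlinarith
    have hminb : η / (2 * (phat i * p i)) ≤ b := by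
      rw [div_le_iff₀ (by positivity), hb']
      have h1 := hlo i
      have h3 := hηle i
      have e : (1 / p i - 1) * (2 * (phat i * p i)) = 2 * phat i * (1 - p i) := by
        field_simp
      rw [e]; nlinarith
    calc |Real.log a - Real.log b| ≤ |a - b| / min a b := abs_log_sub_log_le' ha hb
      _ ≤ |a - b| / (η / (2 * (phat i * p i))) := by
          gcongr
          exact le_min hmina hminb
      _ = (2 / η) * |phat i - p i| := by
          rw [hab]; field_simp
      _ ≤ (4 / η) * M := by
          have h2η : (0:ℝ) < 2 / η := by positivity
          have e : (4 / η : ℝ) = 2 * (2 / η) := by ring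
          rw [e]
          nlinarith [mul_nonneg h2η.le (sub_nonneg.2 (hMle i)), mul_nonneg h2η.le hM0]
  have hsum : ∑ i, |Real.log (1 / phat i - 1) - Real.log (1 / p i - 1)|
      ≤ (n : ℝ) * ((4 / η) * M) := by
    calc ∑ i, |Real.log (1 / phat i - 1) - Real.log (1 / p i - 1)|
        ≤ ∑ _i : Fin n, (4 / η) * M := Finset.sum_le_sum fun i _ => key i
      _ = (n : ℝ) * ((4 / η) * M) := by
          rw [Finset.sum_const, Finset.card_univ, Fintype.card_fin, nsmul_eq_mul]
  calc (1 / (n : ℝ)) * ∑ i, |Real.log (1 / phat i - 1) - Real.log (1 / p i - 1)|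
      ≤ (1 / (n : ℝ)) * ((n : ℝ) * ((4 / η) * M)) := by
        gcongr
    _ = (4 / η) * M := by field_simp
end
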